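/- The bulk equation H1, Q(u00,u10,u01,u11;a,b) = (u00−u11)(u10−u01) + b − a, together with the boundary equation q(x,y,z;a) = y(x+z) and the parameter map σ(a) = −a + 2μ (where μ is a fixed complex parameter), satisfies the 3D boundary consistency condition. -/

import Mathlib

/-!
Each boundary equation `y (x + z) = 0` with `y ≠ 0` forces `z = -x`, so `y₂ = y₃ = -x` and
then `w₁ = w₂ = x`. The bulk equation says `(u₀₀ - u₁₁)(u₁₀ - u₀₁) = a - b`, and `σ` is a
reflection, so `σ a - b = σ b - a` and `σ a - σ b = b - a`. The two bulk equations
on the faces `(y₁, z₁, x₂, y₃)` and `(y₁, z₂, x₁, y₂)` share the diagonal `y₁ - (-x)`, whence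
`z₁ - z₂ = x₂ - x₁`; the faces `(y₁, x₂, x₁, x)` and `(y₁, z₁, z₂, w₃)` then share the other
diagonal and the parameter difference, whence `w₃ = x`.
-/

/-- The bulk quad-graph equation. -/
noncomputable def Qbulk (u00 u10 u01 u11 a b : ℂ) : ℂ :=
  (u00 - u11) * (u10 - u01) + b - a

/-- The boundary equation. -/
noncomputable def qBdry (mu : ℂ) (x y z a : ℂ) : ℂ :=
  y * (x + z)

/-- The parameter map acting on edge labels. -/
noncomputable def sigmaMap (mu : ℂ) (a : ℂ) : ℂ :=
  -a + 2 * mu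

section

variable {mu u00 u10 u01 u11 x y z a b : ℂ}

theorem qBdry_one_sub_qBdry_zero : qBdry mu x y 1 a - qBdry mu x y 0 a = y := by
  unfold qBdry; ring

theorem eq_neg_of_qBdry_eq_zero (hy : qBdry mu x y 1 a - qBdry mu x y 0 a ≠ 0)
    (h : qBdry mu x y z a = 0) : z = -x := by
  rw [qBdry_one_sub_qBdry_zero] at hy
  exact eq_neg_of_add_eq_zero_right ((mul_eq_zero.mp h).resolve_left hy)

theorem Qbulk_eq_zero_iff : Qbulk u00 u10 u01 u11 a b = 0 ↔ (u00 - u11) * (u10 - u01) = a - b := by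
  unfold Qbulk
  constructor <;> intro h <;> linear_combination h

theorem Qbulk_one_sub_Qbulk_zero_left :
    Qbulk u00 1 u01 u11 a b - Qbulk u00 0 u01 u11 a b = u00 - u11 := by
  unfold Qbulk; ring

theorem Qbulk_one_sub_Qbulk_zero_right :
    Qbulk u00 u10 u01 1 a b - Qbulk u00 u10 u01 0 a b = -(u10 - u01) := by
  unfold Qbulk; ring

theorem sigmaMap_sub_comm : sigmaMap mu a - b = sigmaMap mu b - a := by
  unfold sigmaMap; ring

theorem sigmaMap_sub_sigmaMap : sigmaMap mu a - sigmaMap mu b = b - a := by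
  unfold sigmaMap; ring

end

theorem boundary_consistency_stmt_7_general
    (mu : ℂ) (a b : ℂ) 
    (x x1 x2 y1 y2 y3 z1 z2 w1 w2 w3 : ℂ)
    -- the eight equations of the scheme
    (e1 : Qbulk y1 x2 x1 x a b = 0)
    (e2 : qBdry mu x x1 y2 a = 0)
    (e3 : qBdry mu x x2 y3 b = 0)
    (e4 : Qbulk y1 z1 x2 y3 (sigmaMap mu b) a = 0)
    (e5 : Qbulk y1 z2 x1 y2 (sigmaMap mu a) b = 0)
    (e6 : qBdry mu y2 z2 w1 b = 0)
    (e7 : qBdry mu y3 z1 w2 a = 0)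
    (e8 : Qbulk y1 z1 z2 w3 (sigmaMap mu b) (sigmaMap mu a) = 0)
    -- nonvanishing of the coefficient of the determined variable in each
    -- affine-linear equation (coefficient = value at 1 minus value at 0)
    (c2 : qBdry mu x x1 1 a - qBdry mu x x1 0 a ≠ 0)
    (c3 : qBdry mu x x2 1 b - qBdry mu x x2 0 b ≠ 0)
    (c4 : Qbulk y1 1 x2 y3 (sigmaMap mu b) a - Qbulk y1 0 x2 y3 (sigmaMap mu b) a ≠ 0)
    (c6 : qBdry mu y2 z2 1 b - qBdry mu y2 z2 0 b ≠ 0)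
    (c7 : qBdry mu y3 z1 1 a - qBdry mu y3 z1 0 a ≠ 0)
    (c8 : Qbulk y1 z1 z2 1 (sigmaMap mu b) (sigmaMap mu a) - Qbulk y1 z1 z2 0 (sigmaMap mu b) (sigmaMap mu a) ≠ 0) :
    w1 = w2 ∧ w2 = w3 := by
  have hy2 := eq_neg_of_qBdry_eq_zero c2 e2
  have hy3 := eq_neg_of_qBdry_eq_zero c3 e3
  have hw1 := eq_neg_of_qBdry_eq_zero c6 e6
  have hw2 := eq_neg_of_qBdry_eq_zero c7 e7
  rw [Qbulk_one_sub_Qbulk_zero_left] at c4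
  rw [Qbulk_one_sub_Qbulk_zero_right, neg_ne_zero] at c8
  rw [Qbulk_eq_zero_iff] at e1 e4 e5 e8
  rw [sigmaMap_sub_sigmaMap] at e8
  subst hy2 hy3
  have hz : z1 - x2 = z2 - x1 :=
    mul_left_cancel₀ c4 (e4.trans (sigmaMap_sub_comm.trans e5.symm))
  have hz' : z1 - z2 = x2 - x1 := by linear_combination hz
  rw [hz'] at e8 c8
  have hw3 : y1 - w3 = y1 - x := mul_right_cancel₀ c8 (e8.trans e1.symm)
  rw [neg_neg] at hw1 hw2
  exact ⟨hw1.trans hw2.symm, hw2.trans (sub_right_inj.mp hw3).symm⟩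

/-- 3D boundary consistency of the triple (Q, q, σ). -/
theorem boundary_consistency_stmt_7
    (mu : ℂ) (a b : ℂ) 
    (x x1 x2 y1 y2 y3 z1 z2 w1 w2 w3 : ℂ)
    -- the eight equations of the scheme
    (e1 : Qbulk y1 x2 x1 x a b = 0)
    (e2 : qBdry mu x x1 y2 a = 0)
    (e3 : qBdry mu x x2 y3 b = 0)
    (e4 : Qbulk y1 z1 x2 y3 (sigmaMap mu b) a = 0)
    (e5 : Qbulk y1 z2 x1 y2 (sigmaMap mu a) b = 0)
    (e6 : qBdry mu y2 z2 w1 b = 0)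
    (e7 : qBdry mu y3 z1 w2 a = 0)
    (e8 : Qbulk y1 z1 z2 w3 (sigmaMap mu b) (sigmaMap mu a) = 0)
    -- nonvanishing of the coefficient of the determined variable in each
    -- affine-linear equation (coefficient = value at 1 minus value at 0)
    (c1 : Qbulk 1 x2 x1 x a b - Qbulk 0 x2 x1 x a b ≠ 0)
    (c2 : qBdry mu x x1 1 a - qBdry mu x x1 0 a ≠ 0)
    (c3 : qBdry mu x x2 1 b - qBdry mu x x2 0 b ≠ 0)
    (c4 : Qbulk y1 1 x2 y3 (sigmaMap mu b) a - Qbulk y1 0 x2 y3 (sigmaMap mu b) a ≠ 0)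
    (c5 : Qbulk y1 1 x1 y2 (sigmaMap mu a) b - Qbulk y1 0 x1 y2 (sigmaMap mu a) b ≠ 0)
    (c6 : qBdry mu y2 z2 1 b - qBdry mu y2 z2 0 b ≠ 0)
    (c7 : qBdry mu y3 z1 1 a - qBdry mu y3 z1 0 a ≠ 0)
    (c8 : Qbulk y1 z1 z2 1 (sigmaMap mu b) (sigmaMap mu a) - Qbulk y1 z1 z2 0 (sigmaMap mu b) (sigmaMap mu a) ≠ 0) :
    w1 = w2 ∧ w2 = w3 :=
  boundary_consistency_stmt_7_general mu a b x x1 x2 y1 y2 y3 z1 z2 w1 w2 w3 e1 e2 e3 e4 e5 e6 e7 e8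
    c2 c3 c4 c6 c7 c8
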